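/- Let G be a planar circular network with boundary sources A and boundary sinks B, and define F̃_k(a, b) for tuples a ∈ A^k, b ∈ B^k by F̃_k(a,b) = sgn(a,b) · F_k({a₁,…,a_k},{b₁,…,b_k}) when entries are distinct, and 0 otherwise, where F_k(A',B') = (1/C) Σ_{alternating flows f connecting A' to B'} 2^{θ(f)} wt(f), C is the analogous sum over conservative flows, and θ(f) is the collision index. Assuming Talaska's theorem that every maximal minor of the boundary measurement matrix M equals the corresponding F_k(A∖V', V'∖A), it follows that F̃_k(a, b) = det(F̃₁(a_i, b_j))_{i,j=1}^k for all k and all tuples a, b. -/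

import Mathlib

open scoped Classical

/-- The number of inversions of a list with entries in a linear order. -/
def inversions {V : Type*} [LinearOrder V] (l : List V) : ℕ :=
  (Finset.univ.filter (fun p : Fin l.length × Fin l.length =>
    p.1 < p.2 ∧ l.get p.2 < l.get p.1)).card

/-- `sgn(a,b) = (−1)^{inv(a ⌢ (A∖a)) + inv(b ⌢ (A∖a))}`, where `a ⌢ (A∖a)` is the tuple
`a` followed by the remaining elements of `A` in increasing order, and similarly for `b`. -/
noncomputable def sgnAB {V R : Type*} [Fintype V] [LinearOrder V] [CommRing R]
    (A : Finset V) {k : ℕ} (a b : Fin k → V) : R :=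
  (-1) ^ (inversions (List.ofFn a ++ (A \ Finset.image a Finset.univ).sort (· ≤ ·)) +
          inversions (List.ofFn b ++ (A \ Finset.image a Finset.univ).sort (· ≤ ·)))

/-- `F̃_k(a,b)`: the signed flow generating function, equal to
`sgn(a,b) · F({a₁,…,a_k}, {b₁,…,b_k})` when the entries of `a` and of `b` are distinct,
and `0` otherwise.  Here `F A' B'` denotes the normalized weighted sum
`(1/C) Σ_{alternating flows f connecting A' to B'} 2^{θ(f)} wt(f)`. -/
noncomputable def Ftil {V R : Type*} [Fintype V] [LinearOrder V] [CommRing R]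
    (A : Finset V) (F : Finset V → Finset V → R) (k : ℕ) (a b : Fin k → V) : R :=
  if Function.Injective a ∧ Function.Injective b then
    sgnAB A a b * F (Finset.image a Finset.univ) (Finset.image b Finset.univ)
  else 0

/-!
For injective `a ⊆ A` and `b ⊆ Aᶜ` take `V' = (A ∖ a) ∪ b`, so that Talaska's minor on `V'` is
`F(a, b)`. Listing the rows of `M` as `a` followed by `A ∖ a` and the columns `V'` as `b` followed
by `A ∖ a` costs exactly the sign `sgn(a, b)`; since the columns indexed by `A ∖ a` are unit
vectors, the reordered matrix is block lower triangular with an identity corner. Hence `F̃_k(a, b)`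
is the minor of `M` on rows `a` and columns `b`, whose entries are the `F̃₁(aᵢ, bⱼ)`. If `a` or `b`
repeats an entry, both sides vanish.
-/

open Equiv Finset

section Sorting

variable {V : Type*} [LinearOrder V] {n : ℕ}

lemma inversions_ofFn (u : Fin n → V) :
    inversions (List.ofFn u) = #{p : Fin n × Fin n | p.1 < p.2 ∧ u p.2 < u p.1} := by
  unfold inversions
  refine Finset.card_equiv ((finCongr List.length_ofFn).prodCongr (finCongr List.length_ofFn)) ?_
  intro p
  simp only [mem_filter, mem_univ, true_and, List.get_ofFn]
  rfl

lemma Equiv.Perm.sign_eq_neg_one_pow_card_inversions (σ : Perm (Fin n)) :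
    σ.sign = (-1) ^ #{p : Fin n × Fin n | p.1 < p.2 ∧ σ p.2 < σ p.1} := by
  rw [σ.sign_eq_prod_prod_Iio, Finset.prod_sigma', prod_ite, prod_const_one, one_mul, prod_const]
  refine congrArg _ (card_nbij' (fun x => (x.2, x.1)) (fun p => ⟨p.2, p.1⟩) ?_ ?_ ?_ ?_)
  · intro x hx
    simp only [not_lt, coe_filter, mem_sigma, mem_univ, mem_Iio, true_and,
      Set.mem_ofPred_eq] at hx ⊢
    exact ⟨hx.1, lt_of_le_of_ne hx.2 (σ.injective.ne hx.1.ne')⟩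
  · intro p hp
    simp only [not_lt, coe_filter, mem_sigma, mem_univ, mem_Iio, true_and,
      Set.mem_ofPred_eq] at hp ⊢
    exact ⟨hp.1, hp.2.le⟩
  · intro x _; rfl
  · intro p _; rfl

lemma sign_eq_neg_one_pow_inversions_ofFn {f : Fin n → V} (hf : StrictMono f)
    (σ : Perm (Fin n)) : σ.sign = (-1) ^ inversions (List.ofFn (f ∘ σ)) := by
  simp only [σ.sign_eq_neg_one_pow_card_inversions, inversions_ofFn, Function.comp_apply,
    hf.lt_iff_lt]

lemma Finset.exists_perm_orderEmbOfFin_apply_eq (s : Finset V) (hs : #s = n) {u : Fin n → V}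
    (hu : Function.Injective u) (hus : ∀ i, u i ∈ s) :
    ∃ σ : Perm (Fin n), ∀ i, s.orderEmbOfFin hs (σ i) = u i := by
  have hinj : Function.Injective fun i => (s.orderIsoOfFin hs).symm ⟨u i, hus i⟩ := by
    intro i j h
    simpa using hu (congrArg Subtype.val ((s.orderIsoOfFin hs).symm.injective h))
  refine ⟨Equiv.ofBijective _ (Finite.injective_iff_bijective.1 hinj), fun i => ?_⟩
  simp [← Finset.coe_orderIsoOfFin_apply]

lemma Finset.ofFn_orderEmbOfFin (s : Finset V) (hs : #s = n) :
    List.ofFn (s.orderEmbOfFin hs) = s.sort (· ≤ ·) := by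
  apply List.ext_get (by simp [hs])
  intro i _ _
  simp [Finset.orderEmbOfFin_apply]

end Sorting

lemma Matrix.det_eq_det_submatrix_castAdd {R : Type*} [CommRing R] {k n : ℕ}
    (P : Matrix (Fin (k + n)) (Fin (k + n)) R)
    (hzero : ∀ i j, P (Fin.castAdd n i) (Fin.natAdd k j) = 0)
    (hone : ∀ i j, P (Fin.natAdd k i) (Fin.natAdd k j) = if i = j then 1 else 0) :
    P.det = (P.submatrix (Fin.castAdd n) (Fin.castAdd n)).det := by
  have hblocks : P.submatrix finSumFinEquiv finSumFinEquiv =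
      Matrix.fromBlocks (P.submatrix (Fin.castAdd n) (Fin.castAdd n)) 0
        (P.submatrix (Fin.natAdd k) (Fin.castAdd n)) 1 := by
    ext (i | i) (j | j) <;> simp [hzero, hone, Matrix.one_apply]
  rw [← Matrix.det_submatrix_equiv_self finSumFinEquiv, hblocks, Matrix.det_fromBlocks_zero₁₂,
    Matrix.det_one, mul_one]

lemma sgnAB_eq_sign_mul_sign {V R : Type*} [Fintype V] [LinearOrder V] [CommRing R]
    {A W : Finset V} {k n : ℕ} (hA : #A = k + n) (hW : #W = k + n) {a b : Fin k → V}
    (hA' : #(A \ image a univ) = n) {ρ κ : Perm (Fin (k + n))}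
    (hρ : ∀ i, A.orderEmbOfFin hA (ρ i) =
      Fin.append a ((A \ image a univ).orderEmbOfFin hA') i)
    (hκ : ∀ i, W.orderEmbOfFin hW (κ i) =
      Fin.append b ((A \ image a univ).orderEmbOfFin hA') i) :
    sgnAB A a b = (ρ.sign : R) * κ.sign := by
  rw [sign_eq_neg_one_pow_inversions_ofFn (A.orderEmbOfFin hA).strictMono ρ,
    sign_eq_neg_one_pow_inversions_ofFn (W.orderEmbOfFin hW).strictMono κ,
    show ⇑(A.orderEmbOfFin hA) ∘ ρ = _ from funext hρ,
    show ⇑(W.orderEmbOfFin hW) ∘ κ = _ from funext hκ]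
  simp only [sgnAB, Finset.ofFn_orderEmbOfFin, List.ofFn_fin_append]
  push_cast
  exact pow_add _ _ _

lemma Ftil_eq_det {V R : Type*} [Fintype V] [LinearOrder V] [CommRing R]
    (A : Finset V) (F : Finset V → Finset V → R)
    {m : ℕ} (hA : #A = m) (M : Matrix (Fin m) V R)
    (hcol : ∀ i j : Fin m, M j ((A.orderIsoOfFin hA i : V)) = if j = i then 1 else 0)
    (hminor : ∀ (V' : Finset V) (h : #V' = m),
      Matrix.det (Matrix.of fun i j : Fin m => M i ((V'.orderIsoOfFin h j : V))) =
        F (A \ V') (V' \ A))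
    {k : ℕ} {a b : Fin k → V} (ha : ∀ i, a i ∈ A) (hb : ∀ i, b i ∉ A)
    (hai : Function.Injective a) (hbi : Function.Injective b) :
    Ftil A F k a b =
      Matrix.det (Matrix.of fun i j => M ((A.orderIsoOfFin hA).symm ⟨a i, ha i⟩) (b j)) := by
  set ima := image a univ
  set imb := image b univ
  have hima : ima ⊆ A := by simpa [ima, image_subset_iff] using ha
  have himb : Disjoint imb A := by simpa [imb, disjoint_left] using hb
  obtain ⟨n, rfl⟩ : ∃ n, m = k + n :=
    ⟨m - k, by
      have := card_le_card hima
      simp only [ima, card_image_of_injective _ hai, card_univ, Fintype.card_fin] at this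
      omega⟩
  have hA' : #(A \ ima) = n := by
    rw [card_sdiff_of_subset hima, hA, card_image_of_injective _ hai]; simp
  set c := (A \ ima).orderEmbOfFin hA'
  have hc : ∀ j, c j ∈ A \ ima := (A \ ima).orderEmbOfFin_mem hA'
  set V' := A \ ima ∪ imb
  have hV' : #V' = k + n := by
    rw [card_union_of_disjoint (himb.mono_right sdiff_subset).symm, hA',
      card_image_of_injective _ hbi, card_univ, Fintype.card_fin, add_comm]
  obtain ⟨ρ, hρ⟩ := exists_perm_orderEmbOfFin_apply_eq A hA (u := Fin.append a c)
    (Fin.append_injective_iff.2 ⟨hai, c.injective, fun i j h =>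
      (mem_sdiff.1 (hc j)).2 (h ▸ mem_image_of_mem a (mem_univ i))⟩)
    (Fin.addCases (by simpa using ha) fun j => by simpa using (mem_sdiff.1 (hc j)).1)
  obtain ⟨κ, hκ⟩ := exists_perm_orderEmbOfFin_apply_eq V' hV' (u := Fin.append b c)
    (Fin.append_injective_iff.2 ⟨hbi, c.injective, fun i j h =>
      hb i (h ▸ (mem_sdiff.1 (hc j)).1)⟩)
    (Fin.addCases (by simp [V', imb]) fun j => by simpa [V'] using Or.inl (hc j))
  set N := Matrix.of fun i j : Fin (k + n) => M i (V'.orderEmbOfFin hV' j)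
  have hN : N.det = F ima imb := by
    rw [← show A \ V' = ima by grind [disjoint_left],
      ← show V' \ A = imb by grind [disjoint_left], ← hminor V' hV']
    rfl
  have hrow : ∀ i, ρ (Fin.castAdd n i) = (A.orderIsoOfFin hA).symm ⟨a i, ha i⟩ := by
    intro i
    rw [eq_comm, OrderIso.symm_apply_eq, Subtype.ext_iff, coe_orderIsoOfFin_apply, hρ,
      Fin.append_left]
  have hcolc : ∀ x j, M (ρ x) (c j) = if x = Fin.natAdd k j then 1 else 0 := by
    intro x j
    rw [← Fin.append_right a c j, ← hρ, ← coe_orderIsoOfFin_apply, hcol]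
    simp only [ρ.injective.eq_iff]
  calc Ftil A F k a b = ρ.sign * κ.sign * N.det := by
        rw [Ftil, if_pos ⟨hai, hbi⟩, hN, sgnAB_eq_sign_mul_sign hA hV' hA' hρ hκ]
    _ = ((N.submatrix ρ id).submatrix id κ).det := by
        rw [Matrix.det_permute', Matrix.det_permute, mul_assoc, mul_left_comm]
    _ = ((N.submatrix ρ κ).submatrix (Fin.castAdd n) (Fin.castAdd n)).det := by
        refine Matrix.det_eq_det_submatrix_castAdd _ (fun i j => ?_) (fun i j => ?_)
        · simp [N, hκ, hcolc, Fin.ext_iff]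
          omega
        · simp [N, hκ, hcolc]
    _ = _ := by
        congr 1
        ext i j
        simp [N, hrow, hκ]

/-- **The determinant relation for alternating flows.**  Let `G` be a planar circular
network with boundary vertices `V` (totally ordered clockwise), boundary sources `A` and
boundary sinks `B = Aᶜ`, and let `F A' B'` be the normalized generating function of
alternating flows connecting `A'` to `B'`.  Assume Talaska's theorem: there is a boundary
measurement matrix `M` with rows indexed by `A` (via the order isomorphism with `Fin m`)
and columns by `V`, whose column at each source is the corresponding standard basis
vector, and whose maximal minor on each column set `V'` of size `m` (columns in increasing
order) equals `F (A ∖ V') (V' ∖ A)`.  Then `F̃_k(a, b) = det (F̃₁(a_i, b_j))` for all `k`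
and all tuples `a ∈ A^k`, `b ∈ B^k`. -/
theorem flow_determinant {V R : Type*} [Fintype V] [LinearOrder V] [CommRing R]
    (A : Finset V) (F : Finset V → Finset V → R)
    {m : ℕ} (hA : A.card = m) (M : Matrix (Fin m) V R)
    (hcol : ∀ i j : Fin m, M j ((A.orderIsoOfFin hA i : V)) = if j = i then 1 else 0)
    (hminor : ∀ (V' : Finset V) (h : V'.card = m),
      Matrix.det (Matrix.of fun i j : Fin m => M i ((V'.orderIsoOfFin h j : V))) =
        F (A \ V') (V' \ A))
    (k : ℕ) (a b : Fin k → V) (ha : ∀ i, a i ∈ A) (hb : ∀ i, b i ∈ Aᶜ) :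
    Ftil A F k a b =
      Matrix.det (Matrix.of fun i j : Fin k => Ftil A F 1 ![a i] ![b j]) := by
  replace hb : ∀ i, b i ∉ A := fun i => mem_compl.1 (hb i)
  by_cases hinj : Function.Injective a ∧ Function.Injective b
  · have hentry : ∀ i j, Ftil A F 1 ![a i] ![b j] =
        M ((A.orderIsoOfFin hA).symm ⟨a i, ha i⟩) (b j) := fun i j => by
      rw [Ftil_eq_det A F hA M hcol hminor (Fin.forall_fin_one.2 (ha i))
        (Fin.forall_fin_one.2 (hb j)) (Function.injective_of_subsingleton _)
        (Function.injective_of_subsingleton _), Matrix.det_fin_one]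
      rfl
    simp only [Ftil_eq_det A F hA M hcol hminor ha hb hinj.1 hinj.2, hentry]
  · rw [show Ftil A F k a b = 0 from if_neg hinj, eq_comm]
    rcases not_and_or.1 hinj with ha' | hb'
    · obtain ⟨i, j, hij, hne⟩ := Function.not_injective_iff.1 ha'
      exact Matrix.det_zero_of_row_eq hne (funext fun _ => by simp [hij])
    · obtain ⟨i, j, hij, hne⟩ := Function.not_injective_iff.1 hb'
      exact Matrix.det_zero_of_column_eq hne fun _ => by simp [hij]
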